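/- arXiv:2204.05507 — 8 statements merged into one kernel-verified Lean document; each statement's English description precedes it below -/
import Mathlib

section
/- Let X ⊆ ℝⁿ be a convex set, let ℓ_i : ℝⁿ → ℝ be differentiable for i = 1,…,n, let Φ : ℝⁿ → ℝ be convex and differentiable, and define Dℓ(x) = (∂ℓ_i/∂x_i(x))_{i=1}^n and the externality e(x) = ∇Φ(x) − Dℓ(x). Suppose x* ∈ X and p ∈ ℝⁿ satisfy (i) the Nash variational inequality ⟨Dℓ(x*) + p, x − x*⟩ ≥ 0 for all x ∈ X, and (ii) the fixed-point condition e(x*) = p. Then x* is a global minimizer of Φ over X, i.e., Φ(x*) ≤ Φ(x) for all x ∈ X. -/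
/-!
The fixed-point condition says `Dℓ(x*) + p = ∇Φ(x*)`, so the Nash variational inequality is
exactly the first-order optimality condition `⟨∇Φ(x*), x - x*⟩ ≥ 0` for `Φ` on `X`. For convex
`Φ` the tangent inequality `Φ x* + ⟨∇Φ(x*), x - x*⟩ ≤ Φ x`, obtained by restricting `Φ` to the
segment from `x*` to `x`, turns this into global optimality.
-/

open Finset

/-- The vector of players' own-strategy marginal costs: `Dℓ(x)ᵢ = ∂ℓᵢ/∂xᵢ(x)`. -/
noncomputable def ownMarginal {n : ℕ} (ℓ : Fin n → (Fin n → ℝ) → ℝ) (x : Fin n → ℝ) :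
    Fin n → ℝ :=
  fun i => fderiv ℝ (ℓ i) x (Pi.single i 1)

/-- The gradient of a function `Φ : ℝⁿ → ℝ`: `∇Φ(x)ᵢ = ∂Φ/∂xᵢ(x)`. -/
noncomputable def gradVec {n : ℕ} (Φ : (Fin n → ℝ) → ℝ) (x : Fin n → ℝ) : Fin n → ℝ :=
  fun i => fderiv ℝ Φ x (Pi.single i 1)

theorem fderiv_apply_eq_sum_gradVec_mul {n : ℕ} (Φ : (Fin n → ℝ) → ℝ) (x v : Fin n → ℝ) :
    fderiv ℝ Φ x v = ∑ i, gradVec Φ x i * v i := by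
  conv_lhs => rw [pi_eq_sum_univ' v]
  simp [gradVec, mul_comm]

theorem ConvexOn.add_le_of_hasFDerivAt {E : Type*} [NormedAddCommGroup E] [NormedSpace ℝ E]
    {s : Set E} {f : E → ℝ} {f' : E →L[ℝ] ℝ} {x y : E} (hf : ConvexOn ℝ s f) (hx : x ∈ s)
    (hy : y ∈ s) (hfx : HasFDerivAt f f' x) : f x + f' (y - x) ≤ f y := by
  let L : ℝ →ᵃ[ℝ] E := AffineMap.lineMap x y
  have hL : ConvexOn ℝ (L ⁻¹' s) (f ∘ L) := hf.comp_affineMap L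
  have hderiv : HasDerivAt (f ∘ L) (f' (y - x)) 0 := by
    have hfL : HasFDerivAt f f' (L 0) := by simpa [L] using hfx
    exact hfL.comp_hasDerivAt 0 AffineMap.hasDerivAt_lineMap
  have hslope := hL.le_slope_of_hasDerivAt (by simpa [L] using hx) (by simpa [L] using hy)
    one_pos hderiv
  simp only [slope_def_field, Function.comp_apply, sub_zero, div_one, L,
    AffineMap.lineMap_apply_zero, AffineMap.lineMap_apply_one] at hslope
  linarith

theorem nash_externality_fixed_point_is_socially_optimal_general
    (n : ℕ) (X : Set (Fin n → ℝ))
    (ℓ : Fin n → (Fin n → ℝ) → ℝ)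
    (Φ : (Fin n → ℝ) → ℝ) (hΦconv : ConvexOn ℝ Set.univ Φ) (hΦdiff : Differentiable ℝ Φ)
    (xstar : Fin n → ℝ) (p : Fin n → ℝ)
    (hVI : ∀ x ∈ X, 0 ≤ ∑ i, (ownMarginal ℓ xstar i + p i) * (x i - xstar i))
    (hfp : ∀ i, gradVec Φ xstar i - ownMarginal ℓ xstar i = p i) :
    ∀ x ∈ X, Φ xstar ≤ Φ x := by
  intro x hx
  have hgrad : 0 ≤ fderiv ℝ Φ xstar (x - xstar) := by
    rw [fderiv_apply_eq_sum_gradVec_mul]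
    calc 0 ≤ ∑ i, (ownMarginal ℓ xstar i + p i) * (x i - xstar i) := hVI x hx
      _ = ∑ i, gradVec Φ xstar i * (x - xstar) i := by
        refine sum_congr rfl fun i _ => ?_
        rw [← hfp i, add_sub_cancel, Pi.sub_apply]
  have htangent := hΦconv.add_le_of_hasFDerivAt (Set.mem_univ xstar) (Set.mem_univ x)
    (hΦdiff xstar).hasFDerivAt
  linarith

/-- alignment part of Proposition 1, atomic games:
If `x* ∈ X` satisfies the Nash variational inequality for the incentive vector `p`, and
`p` equals the externality `e(x*) = ∇Φ(x*) − Dℓ(x*)`, then `x*` minimizes the convex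
social cost `Φ` over the convex set `X`. -/
theorem nash_externality_fixed_point_is_socially_optimal
    (n : ℕ) (X : Set (Fin n → ℝ)) (hX : Convex ℝ X)
    (ℓ : Fin n → (Fin n → ℝ) → ℝ) (hℓ : ∀ i, Differentiable ℝ (ℓ i))
    (Φ : (Fin n → ℝ) → ℝ) (hΦconv : ConvexOn ℝ Set.univ Φ) (hΦdiff : Differentiable ℝ Φ)
    (xstar : Fin n → ℝ) (p : Fin n → ℝ) (hmem : xstar ∈ X)
    (hVI : ∀ x ∈ X, 0 ≤ ∑ i, (ownMarginal ℓ xstar i + p i) * (x i - xstar i))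
    (hfp : ∀ i, gradVec Φ xstar i - ownMarginal ℓ xstar i = p i) :
    ∀ x ∈ X, Φ xstar ≤ Φ x :=
  nash_externality_fixed_point_is_socially_optimal_general n X ℓ Φ hΦconv hΦdiff xstar p hVI hfp
end

section
/- Let X ⊆ ℝ^m be a convex set, let ℓ̃ : ℝ^m → ℝ^m be a map (the cost vector), let Φ̃ : ℝ^m → ℝ be convex and differentiable, and define the externality ẽ(x) = ∇Φ̃(x) − ℓ̃(x). Suppose x* ∈ X and p̃ ∈ ℝ^m satisfy (i) the Nash variational inequality ⟨ℓ̃(x*) + p̃, x − x*⟩ ≥ 0 for all x ∈ X, and (ii) the fixed-point condition ẽ(x*) = p̃. Then x* is a global minimizer of Φ̃ over X, i.e., Φ̃(x*) ≤ Φ̃(x) for all x ∈ X. -/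
open Finset

/-! A convex differentiable function lies above its tangent planes, so
`Φ x - Φ x* ≥ DΦ(x*) (x - x*)`. By the fixed-point condition the coordinates of `DΦ(x*)` are
`ℓ(x*) + p`, so the right-hand side is the left-hand side of the variational inequality,
which is nonnegative on `X`. -/

theorem ConvexOn.add_fderiv_sub_le {E : Type*} [NormedAddCommGroup E] [NormedSpace ℝ E]
    {s : Set E} {f : E → ℝ} {f' : E →L[ℝ] ℝ} {x y : E} (hf : ConvexOn ℝ s f) (hx : x ∈ s)
    (hy : y ∈ s) (hf' : HasFDerivAt f f' x) :
    f x + f' (y - x) ≤ f y := by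
  set L : ℝ →ᵃ[ℝ] E := AffineMap.lineMap x y
  have hline : ConvexOn ℝ (L ⁻¹' s) (f ∘ L) := hf.comp_affineMap L
  have hderiv : HasDerivAt (f ∘ L) (f' (y - x)) 0 := by
    refine HasFDerivAt.comp_hasDerivAt (0 : ℝ) ?_ AffineMap.hasDerivAt_lineMap
    simpa [L] using hf'
  have hslope := hline.le_slope_of_hasDerivAt (by simpa [L] using hx) (by simpa [L] using hy)
    one_pos hderiv
  simp only [slope_def_field, Function.comp_apply, L, AffineMap.lineMap_apply_one,
    AffineMap.lineMap_apply_zero, sub_zero, div_one] at hslope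
  linarith

theorem ContinuousLinearMap.apply_eq_sum_mul_apply_single {ι : Type*} [Fintype ι]
    [DecidableEq ι] (f : (ι → ℝ) →L[ℝ] ℝ) (v : ι → ℝ) :
    f v = ∑ j, v j * f (Pi.single j 1) := by
  conv_lhs => rw [pi_eq_sum_univ' v]
  simp only [map_sum, map_smul, smul_eq_mul]

theorem nonatomic_externality_fixed_point_is_socially_optimal_general
    (m : ℕ) (X : Set (Fin m → ℝ))
    (ℓ : (Fin m → ℝ) → (Fin m → ℝ))
    (Φ : (Fin m → ℝ) → ℝ) (hΦconv : ConvexOn ℝ Set.univ Φ) (hΦdiff : Differentiable ℝ Φ)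
    (xstar : Fin m → ℝ) (p : Fin m → ℝ)
    (hVI : ∀ x ∈ X, 0 ≤ ∑ j, (ℓ xstar j + p j) * (x j - xstar j))
    (hfp : ∀ j, fderiv ℝ Φ xstar (Pi.single j 1) - ℓ xstar j = p j) :
    ∀ x ∈ X, Φ xstar ≤ Φ x := by
  intro x hx
  have hgrad : fderiv ℝ Φ xstar (x - xstar) = ∑ j, (ℓ xstar j + p j) * (x j - xstar j) := by
    rw [ContinuousLinearMap.apply_eq_sum_mul_apply_single]
    refine sum_congr rfl fun j _ => ?_
    rw [← hfp j, Pi.sub_apply]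
    ring
  have htangent := hΦconv.add_fderiv_sub_le (Set.mem_univ xstar) (Set.mem_univ x)
    (hΦdiff xstar).hasFDerivAt
  linarith [hVI x hx]

/-- alignment part of Proposition 1, non-atomic games:
If `x* ∈ X` satisfies the Wardrop variational inequality for the incentive vector `p̃`, and
`p̃` equals the externality `ẽ(x*) = ∇Φ̃(x*) − ℓ̃(x*)`, then `x*` minimizes the convex
social cost `Φ̃` over the convex set `X`. -/
theorem nonatomic_externality_fixed_point_is_socially_optimal
    (m : ℕ) (X : Set (Fin m → ℝ)) (hX : Convex ℝ X)
    (ℓ : (Fin m → ℝ) → (Fin m → ℝ))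
    (Φ : (Fin m → ℝ) → ℝ) (hΦconv : ConvexOn ℝ Set.univ Φ) (hΦdiff : Differentiable ℝ Φ)
    (xstar : Fin m → ℝ) (p : Fin m → ℝ) (hmem : xstar ∈ X)
    (hVI : ∀ x ∈ X, 0 ≤ ∑ j, (ℓ xstar j + p j) * (x j - xstar j))
    (hfp : ∀ j, fderiv ℝ Φ xstar (Pi.single j 1) - ℓ xstar j = p j) :
    ∀ x ∈ X, Φ xstar ≤ Φ x :=
  nonatomic_externality_fixed_point_is_socially_optimal_general m X ℓ Φ hΦconv hΦdiff xstar p hVI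
    hfp
end

section
/- Let ℓ_i : ℝⁿ → ℝ be differentiable for i = 1,…,n, let Φ : ℝⁿ → ℝ be strictly convex and differentiable, and define Dℓ(x) = (∂ℓ_i/∂x_i(x))_{i=1}^n and e(x) = ∇Φ(x) − Dℓ(x). Let x* : ℝⁿ → ℝⁿ be a map satisfying the interior first-order condition Dℓ(x*(p)) + p = 0 for every p ∈ ℝⁿ. If p†, q† ∈ ℝⁿ both satisfy the fixed-point conditions e(x*(p†)) = p† and e(x*(q†)) = q†, then p† = q†. -/
theorem ConvexOn.isMinOn_of_hasFDerivAt_eq_zero {E : Type*} [NormedAddCommGroup E]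
    [NormedSpace ℝ E] {s : Set E} {f : E → ℝ} {a : E} (hf : ConvexOn ℝ s f) (ha : a ∈ s)
    (hf' : HasFDerivAt f (0 : E →L[ℝ] ℝ) a) : IsMinOn f s a := by
  intro y hy
  let L : ℝ →ᵃ[ℝ] E := AffineMap.lineMap a y
  have hderiv : HasDerivAt (f ∘ L) 0 0 := by
    simpa using hf'.comp_hasDerivAt_of_eq (0 : ℝ) AffineMap.hasDerivAt_lineMap (by simp)
  have h0 : (0 : ℝ) ∈ L ⁻¹' s := by simpa [L] using ha
  have h1 : (1 : ℝ) ∈ L ⁻¹' s := by simpa [L] using hy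
  simpa [slope_def_field, L] using
    (hf.comp_affineMap L).le_slope_of_hasDerivAt h0 h1 one_pos hderiv

theorem fderiv_eq_zero_of_gradVec_eq_zero {n : ℕ} {Φ : (Fin n → ℝ) → ℝ} {x : Fin n → ℝ}
    (h : gradVec Φ x = 0) : fderiv ℝ Φ x = 0 :=
  ContinuousLinearMap.coe_injective <| (Pi.basisFun ℝ (Fin n)).ext fun i => by
    simpa [gradVec] using congrFun h i

theorem interior_equilibria_unique_optimal_incentive_general
    (n : ℕ) (ℓ : Fin n → (Fin n → ℝ) → ℝ)
    (Φ : (Fin n → ℝ) → ℝ) (hΦconv : StrictConvexOn ℝ Set.univ Φ)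
    (hΦdiff : Differentiable ℝ Φ)
    (xstar : (Fin n → ℝ) → (Fin n → ℝ))
    (hFOC : ∀ p : Fin n → ℝ, ∀ i, ownMarginal ℓ (xstar p) i + p i = 0)
    (pdag qdag : Fin n → ℝ)
    (hp : ∀ i, gradVec Φ (xstar pdag) i - ownMarginal ℓ (xstar pdag) i = pdag i)
    (hq : ∀ i, gradVec Φ (xstar qdag) i - ownMarginal ℓ (xstar qdag) i = qdag i) :
    pdag = qdag := by
  have isMinOn_of_fixed : ∀ p : Fin n → ℝ,
      (∀ i, gradVec Φ (xstar p) i - ownMarginal ℓ (xstar p) i = p i) →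
      IsMinOn Φ Set.univ (xstar p) := by
    intro p hfix
    have hgrad : gradVec Φ (xstar p) = 0 := funext fun i => by
      rw [Pi.zero_apply]; linarith [hfix i, hFOC p i]
    refine hΦconv.convexOn.isMinOn_of_hasFDerivAt_eq_zero (Set.mem_univ _) ?_
    simpa [fderiv_eq_zero_of_gradVec_eq_zero hgrad] using (hΦdiff (xstar p)).hasFDerivAt
  have hx : xstar pdag = xstar qdag :=
    hΦconv.eq_of_isMinOn (isMinOn_of_fixed pdag hp) (isMinOn_of_fixed qdag hq)
      (Set.mem_univ _) (Set.mem_univ _)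
  funext i
  linarith [hFOC pdag i, hFOC qdag i, congrArg (ownMarginal ℓ · i) hx]

/-- Proposition 2, condition (i):
If the equilibrium map `x*` satisfies the interior first-order condition
`Dℓ(x*(p)) + p = 0` for every `p`, `Φ` is strictly convex and differentiable, and the
externality `e(x) = ∇Φ(x) − Dℓ(x)`, then there is at most one fixed point of
`p ↦ e(x*(p))`. -/
theorem interior_equilibria_unique_optimal_incentive
    (n : ℕ) (ℓ : Fin n → (Fin n → ℝ) → ℝ) (hℓ : ∀ i, Differentiable ℝ (ℓ i))
    (Φ : (Fin n → ℝ) → ℝ) (hΦconv : StrictConvexOn ℝ Set.univ Φ)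
    (hΦdiff : Differentiable ℝ Φ)
    (xstar : (Fin n → ℝ) → (Fin n → ℝ))
    (hFOC : ∀ p : Fin n → ℝ, ∀ i, ownMarginal ℓ (xstar p) i + p i = 0)
    (pdag qdag : Fin n → ℝ)
    (hp : ∀ i, gradVec Φ (xstar pdag) i - ownMarginal ℓ (xstar pdag) i = pdag i)
    (hq : ∀ i, gradVec Φ (xstar qdag) i - ownMarginal ℓ (xstar qdag) i = qdag i) :
    pdag = qdag :=
  interior_equilibria_unique_optimal_incentive_general n ℓ Φ hΦconv hΦdiff xstar hFOC pdag qdag hp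
    hq
end

section
/- Let X ⊆ ℝⁿ, let ℓ_i : ℝⁿ → ℝ be differentiable for i = 1,…,n with Dℓ(x) = (∂ℓ_i/∂x_i(x))_{i=1}^n monotone on X (⟨Dℓ(x) − Dℓ(y), x − y⟩ ≥ 0 for all x, y ∈ X), and let e : ℝⁿ → ℝⁿ be strictly monotone on X, i.e., ⟨e(x) − e(y), x − y⟩ > 0 for all x ≠ y in X. Let x* : ℝⁿ → X be a map such that for every p ∈ ℝⁿ, ⟨Dℓ(x*(p)) + p, x − x*(p)⟩ ≥ 0 for all x ∈ X. Then there is at most one p† ∈ ℝⁿ satisfying e(x*(p†)) = p†. -/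
/-!
Write `x = x*(p)` and `y = x*(q)`. Testing the variational inequality at `p` with `y` and at `q`
with `x` and adding, monotonicity of `Dℓ` gives `⟨p - q, x - y⟩ ≤ 0`: the equilibrium map is
antitone in the incentive. If `p = e x` and `q = e y`, strict monotonicity of `e` forces `x = y`,
hence `p = e x = e y = q`.
-/

open Finset

section

variable {ι : Type*} [Fintype ι]

theorem dotProduct_sub_nonpos_of_variational_inequalities {X : Set (ι → ℝ)}
    {F : (ι → ℝ) → ι → ℝ} (hF : ∀ x ∈ X, ∀ y ∈ X, 0 ≤ (F x - F y) ⬝ᵥ (x - y))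
    {p q x y : ι → ℝ} (hxX : x ∈ X) (hyX : y ∈ X)
    (hx : ∀ z ∈ X, 0 ≤ (F x + p) ⬝ᵥ (z - x)) (hy : ∀ z ∈ X, 0 ≤ (F y + q) ⬝ᵥ (z - y)) :
    (p - q) ⬝ᵥ (x - y) ≤ 0 := by
  have hsum : (F x + p) ⬝ᵥ (y - x) + (F y + q) ⬝ᵥ (x - y)
      = -((F x - F y) ⬝ᵥ (x - y)) - (p - q) ⬝ᵥ (x - y) := by
    simp only [add_dotProduct, sub_dotProduct, dotProduct_sub]
    ring
  linarith [hx y hyX, hy x hxX, hF x hxX y hyX]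

theorem fixedPoints_comp_subsingleton {X : Set (ι → ℝ)} {e φ : (ι → ℝ) → ι → ℝ}
    (he : ∀ x ∈ X, ∀ y ∈ X, x ≠ y → 0 < (e x - e y) ⬝ᵥ (x - y)) (hφX : ∀ p, φ p ∈ X)
    (hφ : ∀ p q, (p - q) ⬝ᵥ (φ p - φ q) ≤ 0) :
    (Function.fixedPoints (e ∘ φ)).Subsingleton := by
  intro p (hp : e (φ p) = p) q (hq : e (φ q) = q)
  have hφpq : φ p = φ q := by
    by_contra hne
    have hpos := he _ (hφX p) _ (hφX q) hne
    rw [hp, hq] at hpos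
    exact (hφ p q).not_gt hpos
  rw [← hp, ← hq, hφpq]

end

theorem strictly_monotone_externality_unique_optimal_incentive_general
    (n : ℕ) (X : Set (Fin n → ℝ))
    (ℓ : Fin n → (Fin n → ℝ) → ℝ)
    (hmono : ∀ x ∈ X, ∀ y ∈ X,
      0 ≤ ∑ i, (ownMarginal ℓ x i - ownMarginal ℓ y i) * (x i - y i))
    (e : (Fin n → ℝ) → (Fin n → ℝ))
    (hemono : ∀ x ∈ X, ∀ y ∈ X, x ≠ y → 0 < ∑ i, (e x i - e y i) * (x i - y i))
    (xstar : (Fin n → ℝ) → (Fin n → ℝ)) (hxmem : ∀ p, xstar p ∈ X)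
    (hVI : ∀ p : Fin n → ℝ, ∀ x ∈ X,
      0 ≤ ∑ i, (ownMarginal ℓ (xstar p) i + p i) * (x i - xstar p i)) :
    ∀ pdag qdag : Fin n → ℝ, e (xstar pdag) = pdag → e (xstar qdag) = qdag →
      pdag = qdag := by
  have hanti : ∀ p q, (p - q) ⬝ᵥ (xstar p - xstar q) ≤ 0 := fun p q =>
    dotProduct_sub_nonpos_of_variational_inequalities (F := ownMarginal ℓ) hmono
      (hxmem p) (hxmem q) (hVI p) (hVI q)
  intro pdag qdag hp hq
  exact fixedPoints_comp_subsingleton hemono hxmem hanti hp hq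

/-- Proposition 2, condition (ii), atomic games:
If `Dℓ` is monotone on `X`, the externality `e` is strictly monotone on `X`, and `x*(p)`
is a Nash equilibrium for every incentive `p` (characterized by the variational
inequality), then there is at most one fixed point of `p ↦ e(x*(p))`. -/
theorem strictly_monotone_externality_unique_optimal_incentive
    (n : ℕ) (X : Set (Fin n → ℝ))
    (ℓ : Fin n → (Fin n → ℝ) → ℝ) (hℓ : ∀ i, Differentiable ℝ (ℓ i))
    (hmono : ∀ x ∈ X, ∀ y ∈ X,
      0 ≤ ∑ i, (ownMarginal ℓ x i - ownMarginal ℓ y i) * (x i - y i))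
    (e : (Fin n → ℝ) → (Fin n → ℝ))
    (hemono : ∀ x ∈ X, ∀ y ∈ X, x ≠ y → 0 < ∑ i, (e x i - e y i) * (x i - y i))
    (xstar : (Fin n → ℝ) → (Fin n → ℝ)) (hxmem : ∀ p, xstar p ∈ X)
    (hVI : ∀ p : Fin n → ℝ, ∀ x ∈ X,
      0 ≤ ∑ i, (ownMarginal ℓ (xstar p) i + p i) * (x i - xstar p i)) :
    ∀ pdag qdag : Fin n → ℝ, e (xstar pdag) = pdag → e (xstar qdag) = qdag →
      pdag = qdag :=
  strictly_monotone_externality_unique_optimal_incentive_general n X ℓ hmono e hemono xstar hxmem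
    hVI
end

section
/- Let X ⊆ ℝ^m, let ℓ̃ : X → ℝ^m be strictly monotone on X, i.e., ⟨ℓ̃(x) − ℓ̃(y), x − y⟩ > 0 for all x ≠ y in X, and let ẽ : X → ℝ^m be strictly monotone on X, i.e., ⟨ẽ(x) − ẽ(y), x − y⟩ > 0 for all x ≠ y in X. Let x̃* : ℝ^m → X be a map such that for every p̃ ∈ ℝ^m, ⟨ℓ̃(x̃*(p̃)) + p̃, x − x̃*(p̃)⟩ ≥ 0 for all x ∈ X. Then there is at most one p̃† ∈ ℝ^m satisfying ẽ(x̃*(p̃†)) = p̃†. -/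
/-!
Equilibria are monotone in the incentive: adding the variational inequalities of the equilibria
`x` for `p` and `y` for `q`, each tested at the other, gives `⟨ℓ x - ℓ y + (p - q), x - y⟩ ≤ 0`.
At two fixed points `p = e x`, `q = e y` the left side is a sum of a nonnegative and a positive
term unless `x = y`, and then `p = e x = e y = q`.
-/

def IsWardropEquilibrium {ι : Type*} [Fintype ι] (X : Set (ι → ℝ)) (ℓ : (ι → ℝ) → ι → ℝ)
    (p x : ι → ℝ) : Prop :=
  x ∈ X ∧ ∀ z ∈ X, 0 ≤ (ℓ x + p) ⬝ᵥ (z - x)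

namespace IsWardropEquilibrium

variable {ι : Type*} [Fintype ι] {X : Set (ι → ℝ)} {ℓ : (ι → ℝ) → ι → ℝ} {p q x y : ι → ℝ}

theorem dotProduct_sub_nonpos (hx : IsWardropEquilibrium X ℓ p x)
    (hy : IsWardropEquilibrium X ℓ q y) : (ℓ x - ℓ y + (p - q)) ⬝ᵥ (x - y) ≤ 0 := by
  have hxy := hx.2 y hy.1
  have hyx := hy.2 x hx.1
  have h : (ℓ x - ℓ y + (p - q)) ⬝ᵥ (x - y) = -((ℓ x + p) ⬝ᵥ (y - x) + (ℓ y + q) ⬝ᵥ (x - y)) := by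
    simp only [dotProduct, ← Finset.sum_add_distrib, ← Finset.sum_neg_distrib]
    refine Finset.sum_congr rfl fun j _ => ?_
    simp only [Pi.add_apply, Pi.sub_apply]
    ring
  linarith

theorem eq_of_eq_apply (hx : IsWardropEquilibrium X ℓ p x) (hy : IsWardropEquilibrium X ℓ q y)
    {e : (ι → ℝ) → ι → ℝ} (hℓ : ∀ x ∈ X, ∀ y ∈ X, 0 ≤ (ℓ x - ℓ y) ⬝ᵥ (x - y))
    (he : ∀ x ∈ X, ∀ y ∈ X, x ≠ y → 0 < (e x - e y) ⬝ᵥ (x - y))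
    (hp : e x = p) (hq : e y = q) : x = y := by
  by_contra hne
  have hsum := hx.dotProduct_sub_nonpos hy
  rw [add_dotProduct] at hsum
  have hpos := he x hx.1 y hy.1 hne
  rw [hp, hq] at hpos
  linarith [hℓ x hx.1 y hy.1]

end IsWardropEquilibrium

/-- Proposition 2, non-atomic games:
If the cost map `ℓ̃` and the externality `ẽ` are both strictly monotone on `X`, and
`x̃*(p̃)` is a Wardrop equilibrium for every incentive `p̃` (characterized by the
variational inequality), then there is at most one fixed point of `p̃ ↦ ẽ(x̃*(p̃))`. -/
theorem nonatomic_unique_optimal_incentive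
    (m : ℕ) (X : Set (Fin m → ℝ))
    (ℓ : (Fin m → ℝ) → (Fin m → ℝ))
    (hℓmono : ∀ x ∈ X, ∀ y ∈ X, x ≠ y → 0 < ∑ j, (ℓ x j - ℓ y j) * (x j - y j))
    (e : (Fin m → ℝ) → (Fin m → ℝ))
    (hemono : ∀ x ∈ X, ∀ y ∈ X, x ≠ y → 0 < ∑ j, (e x j - e y j) * (x j - y j))
    (xstar : (Fin m → ℝ) → (Fin m → ℝ)) (hxmem : ∀ p, xstar p ∈ X)
    (hVI : ∀ p : Fin m → ℝ, ∀ x ∈ X,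
      0 ≤ ∑ j, (ℓ (xstar p) j + p j) * (x j - xstar p j)) :
    ∀ pdag qdag : Fin m → ℝ, e (xstar pdag) = pdag → e (xstar qdag) = qdag →
      pdag = qdag := by
  intro p q hp hq
  have hEq : ∀ p, IsWardropEquilibrium X ℓ p (xstar p) := fun p => ⟨hxmem p, hVI p⟩
  have hℓ : ∀ x ∈ X, ∀ y ∈ X, 0 ≤ (ℓ x - ℓ y) ⬝ᵥ (x - y) := by
    intro x hx y hy
    rcases eq_or_ne x y with rfl | hne
    · simp
    · exact (hℓmono x hx y hy hne).le
  have hx : xstar p = xstar q := (hEq p).eq_of_eq_apply (hEq q) hℓ hemono hp hq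
  rw [← hp, ← hq, hx]
end

section
/- Let n ≥ 1, let W ∈ ℝ^{n×n} with W_ii = 0, let K = diag(k₁,…,k_n), and let ξ ∈ ℝⁿ. In the networked aggregative game with player costs ℓ_i(x) = ½ x_i² − k_i x_i (Wx)_i and social cost Φ(x) = ½ Σ_i (x_i − ξ_i)², the externality e(x) = ∇Φ(x) − (∂ℓ_i/∂x_i(x))_i equals e(x) = KWx − ξ. There is exactly one pair (x̂, p̂) ∈ ℝⁿ × ℝⁿ satisfying both the fixed-point condition e(x̂) = p̂ and the Nash condition (I − KW) x̂ = −p̂, namely x̂ = ξ and p̂ = (KW − I) ξ. In particular, the induced equilibrium x̂ = ξ is the unique minimizer of Φ. -/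
/-!
Since `W i i = 0`, the aggregate `(W x) i` seen by player `i` does not depend on `x i`, so
`∂ℓᵢ/∂xᵢ = xᵢ - kᵢ (W x)ᵢ` while `∂Φ/∂xᵢ = xᵢ - ξᵢ`; hence `e(x) = K W x - ξ`. Adding the
fixed-point equation `K W x̂ - ξ = p̂` to the Nash equation `x̂ - K W x̂ = -p̂` cancels `K W x̂`
and leaves `x̂ = ξ`, which then determines `p̂`.
-/

open Finset Matrix

/-- Player `i`'s cost in the networked aggregative game:
`ℓᵢ(x) = ½ xᵢ² − kᵢ xᵢ (Wx)ᵢ`. -/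
noncomputable def aggLoss {n : ℕ} (W : Matrix (Fin n) (Fin n) ℝ) (k : Fin n → ℝ)
    (i : Fin n) (x : Fin n → ℝ) : ℝ :=
  (1 / 2 : ℝ) * (x i) ^ 2 - k i * x i * (W.mulVec x i)

/-- Social cost of the networked aggregative game: `Φ(x) = ½ Σᵢ (xᵢ − ξᵢ)²`. -/
noncomputable def aggSocialCost {n : ℕ} (ξ : Fin n → ℝ) (x : Fin n → ℝ) : ℝ :=
  (1 / 2 : ℝ) * ∑ i, (x i - ξ i) ^ 2

/-- Externality `e(x)ᵢ = ∂Φ/∂xᵢ(x) − ∂ℓᵢ/∂xᵢ(x)` of the networked aggregative game. -/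
noncomputable def aggExternality {n : ℕ} (W : Matrix (Fin n) (Fin n) ℝ) (k : Fin n → ℝ)
    (ξ : Fin n → ℝ) (x : Fin n → ℝ) (i : Fin n) : ℝ :=
  fderiv ℝ (aggSocialCost ξ) x (Pi.single i 1) - fderiv ℝ (aggLoss W k i) x (Pi.single i 1)

open ContinuousLinearMap in
theorem fderiv_aggSocialCost_single {n : ℕ} (ξ x : Fin n → ℝ) (i : Fin n) :
    fderiv ℝ (aggSocialCost ξ) x (Pi.single i 1) = x i - ξ i := by
  have hsq (j : Fin n) : HasFDerivAt (fun y : Fin n → ℝ => (y j - ξ j) ^ 2)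
      ((2 * (x j - ξ j)) • (proj j : (Fin n → ℝ) →L[ℝ] ℝ)) x := by
    simpa using ((hasFDerivAt_apply (𝕜 := ℝ) j x).sub_const (ξ j)).pow 2
  have hΦ : HasFDerivAt (aggSocialCost ξ) _ x :=
    (HasFDerivAt.fun_sum fun j _ => hsq j).const_mul (1 / 2)
  rw [hΦ.fderiv]
  simp [Pi.single_apply]

open ContinuousLinearMap in
theorem fderiv_aggLoss_single {n : ℕ} (W : Matrix (Fin n) (Fin n) ℝ) (k : Fin n → ℝ)
    {i : Fin n} (hW : W i i = 0) (x : Fin n → ℝ) :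
    fderiv ℝ (aggLoss W k i) x (Pi.single i 1) = x i - k i * (W *ᵥ x) i := by
  have hagg : HasFDerivAt (fun y : Fin n → ℝ => (W *ᵥ y) i)
      ((proj i).comp (toLin' W).toContinuousLinearMap) x :=
    ((proj i).comp (toLin' W).toContinuousLinearMap).hasFDerivAt
  have hxi := hasFDerivAt_apply (𝕜 := ℝ) i x
  have hℓ : HasFDerivAt (aggLoss W k i) _ x :=
    ((hxi.pow 2).const_mul (1 / 2)).fun_sub ((hxi.const_mul (k i)).fun_mul hagg)
  rw [hℓ.fderiv]
  simp [mulVec_single, hW]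
  ring

theorem aggExternality_eq {n : ℕ} {W : Matrix (Fin n) (Fin n) ℝ} (hW : ∀ i, W i i = 0)
    (k ξ x : Fin n → ℝ) :
    aggExternality W k ξ x = (diagonal k * W) *ᵥ x - ξ := by
  ext i
  rw [aggExternality, fderiv_aggSocialCost_single, fderiv_aggLoss_single W k (hW i),
    ← mulVec_mulVec, Pi.sub_apply, mulVec_diagonal]
  ring

theorem Matrix.mulVec_sub_eq_and_one_sub_mulVec_eq_neg_iff {ι R : Type*} [Fintype ι]
    [DecidableEq ι] [Ring R] (A : Matrix ι ι R) (ξ x p : ι → R) :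
    (A *ᵥ x - ξ = p ∧ (1 - A) *ᵥ x = -p) ↔ (x = ξ ∧ p = (A - 1) *ᵥ ξ) := by
  simp only [sub_mulVec, one_mulVec]
  constructor
  · rintro ⟨rfl, h⟩
    obtain rfl : x = ξ := by simpa using h
    simp
  · rintro ⟨rfl, rfl⟩
    simp

theorem aggSocialCost_self {n : ℕ} (ξ : Fin n → ℝ) : aggSocialCost ξ ξ = 0 := by
  simp [aggSocialCost]

theorem aggSocialCost_pos {n : ℕ} {ξ x : Fin n → ℝ} (hx : x ≠ ξ) : 0 < aggSocialCost ξ x := by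
  obtain ⟨i, hi⟩ := Function.ne_iff.mp hx
  have hsum : 0 < ∑ j, (x j - ξ j) ^ 2 :=
    sum_pos' (fun j _ => sq_nonneg _)
      ⟨i, mem_univ i, sq_pos_of_ne_zero (sub_ne_zero.mpr hi)⟩
  unfold aggSocialCost
  positivity

theorem aggregative_optimal_incentive_general
    (n : ℕ) (W : Matrix (Fin n) (Fin n) ℝ) (hW : ∀ i, W i i = 0)
    (k : Fin n → ℝ) (ξ : Fin n → ℝ) :
    (∀ (x : Fin n → ℝ) (i : Fin n),
      aggExternality W k ξ x i = (Matrix.diagonal k * W).mulVec x i - ξ i) ∧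
    (∀ (xh ph : Fin n → ℝ),
      ((∀ i, aggExternality W k ξ xh i = ph i) ∧
          (1 - Matrix.diagonal k * W).mulVec xh = -ph)
        ↔ (xh = ξ ∧ ph = (Matrix.diagonal k * W - 1).mulVec ξ)) ∧
    (∀ x : Fin n → ℝ, x ≠ ξ → aggSocialCost ξ ξ < aggSocialCost ξ x) := by
  refine ⟨fun x i => congrFun (aggExternality_eq hW k ξ x) i, fun xh ph => ?_, fun x hx => ?_⟩
  · rw [← funext_iff, aggExternality_eq hW]
    exact Matrix.mulVec_sub_eq_and_one_sub_mulVec_eq_neg_iff _ ξ xh ph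
  · exact aggSocialCost_self ξ ▸ aggSocialCost_pos hx

/-- fixed-point part of Proposition 3, networked aggregative games:
the externality equals `e(x) = KWx − ξ`; the unique pair satisfying `e(x̂) = p̂` and the
Nash condition `(I − KW) x̂ = −p̂` is `x̂ = ξ, p̂ = (KW − I)ξ`; and `ξ` is the unique
minimizer of `Φ`. -/
theorem aggregative_optimal_incentive
    (n : ℕ) (hn : 1 ≤ n) (W : Matrix (Fin n) (Fin n) ℝ) (hW : ∀ i, W i i = 0)
    (k : Fin n → ℝ) (ξ : Fin n → ℝ) :
    (∀ (x : Fin n → ℝ) (i : Fin n),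
      aggExternality W k ξ x i = (Matrix.diagonal k * W).mulVec x i - ξ i) ∧
    (∀ (xh ph : Fin n → ℝ),
      ((∀ i, aggExternality W k ξ xh i = ph i) ∧
          (1 - Matrix.diagonal k * W).mulVec xh = -ph)
        ↔ (xh = ξ ∧ ph = (Matrix.diagonal k * W - 1).mulVec ξ)) ∧
    (∀ x : Fin n → ℝ, x ≠ ξ → aggSocialCost ξ ξ < aggSocialCost ξ x) :=
  aggregative_optimal_incentive_general n W hW k ξ
end

section
/- Let n ≥ 1, let W ∈ ℝ^{n×n} with W_ii = 0, let K = diag(k₁,…,k_n), let ξ ∈ ℝⁿ, and suppose A = I − KW is invertible. Let M ∈ ℝ^{n×n} be symmetric and satisfy (A^{−1})ᵀ M + M A^{−1} = I. Define x*(p) = −A^{−1} p, e(x) = KWx − ξ, and p† = (KW − I) ξ. Then for every p ∈ ℝⁿ: 2 (p − p†)ᵀ M (e(x*(p)) − p) = −‖p − p†‖², where ‖·‖ is the Euclidean norm. In particular, the Lyapunov function V(p) = (p − p†)ᵀ M (p − p†) strictly decreases along the incentive dynamics ṗ = e(x*(p)) − p at every p ≠ p†. -/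
open Finset Matrix

/-!
With `A = I − KW`, the equilibrium externality is `e(x*(p)) = (I − A)(−A⁻¹p) − ξ = p − A⁻¹p − ξ`,
and `p† = −Aξ`, so the drift of the incentive dynamics is linear in the error:
`e(x*(p)) − p = −A⁻¹(p − p†)`. For symmetric `M`, the quadratic forms of `(A⁻¹)ᵀM` and `MA⁻¹`
agree, so the Lyapunov equation `(A⁻¹)ᵀM + MA⁻¹ = I` gives
`2 qᵀ M A⁻¹ q = qᵀ q` for every `q`, in particular for `q = p − p†`.
-/

section

variable {ι R : Type*} [Fintype ι] [CommRing R]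

theorem one_sub_mulVec_neg_inv_mulVec_sub_sub [DecidableEq ι] {A : Matrix ι ι R}
    (hA : IsUnit A.det) (ξ p : ι → R) :
    (1 - A) *ᵥ -(A⁻¹ *ᵥ p) - ξ - p = -(A⁻¹ *ᵥ (p + A *ᵥ ξ)) := by
  have hξ : A⁻¹ *ᵥ (A *ᵥ ξ) = ξ := by
    rw [mulVec_mulVec, nonsing_inv_mul A hA, one_mulVec]
  have hp : A *ᵥ (A⁻¹ *ᵥ p) = p := by
    rw [mulVec_mulVec, mul_nonsing_inv A hA, one_mulVec]
  rw [mulVec_add, hξ, mulVec_neg, sub_mulVec, one_mulVec, hp]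
  abel

theorem dotProduct_transpose_mul_mulVec (B M : Matrix ι ι R) (q : ι → R) :
    q ⬝ᵥ (Bᵀ * M) *ᵥ q = q ⬝ᵥ (Mᵀ * B) *ᵥ q := by
  rw [← mulVec_mulVec, dotProduct_transpose_mulVec, ← mulVec_mulVec, dotProduct_transpose_mulVec,
    dotProduct_comm]

theorem Matrix.IsSymm.two_mul_dotProduct_mul_mulVec [DecidableEq ι] {M B : Matrix ι ι R}
    (hM : M.IsSymm) (hB : Bᵀ * M + M * B = 1) (q : ι → R) :
    2 * (q ⬝ᵥ (M * B) *ᵥ q) = q ⬝ᵥ q := by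
  have h := congrArg (fun N => q ⬝ᵥ N *ᵥ q) hB
  simp only [add_mulVec, dotProduct_add, one_mulVec] at h
  rw [dotProduct_transpose_mul_mulVec, hM.eq] at h
  rw [two_mul, h]

end

theorem aggregative_lyapunov_identity_general
    (n : ℕ) (W : Matrix (Fin n) (Fin n) ℝ)
    (k ξ : Fin n → ℝ)
    (A : Matrix (Fin n) (Fin n) ℝ) (hA : A = 1 - Matrix.diagonal k * W)
    (hAunit : IsUnit A.det)
    (M : Matrix (Fin n) (Fin n) ℝ) (hMsymm : M.IsSymm)
    (hLyap : (A⁻¹)ᵀ * M + M * A⁻¹ = 1)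
    (xstar : (Fin n → ℝ) → (Fin n → ℝ)) (hxstar : ∀ p, xstar p = -(A⁻¹.mulVec p))
    (e : (Fin n → ℝ) → (Fin n → ℝ))
    (he : ∀ x, e x = (Matrix.diagonal k * W).mulVec x - ξ)
    (pdag : Fin n → ℝ) (hpdag : pdag = (Matrix.diagonal k * W - 1).mulVec ξ) :
    (∀ p : Fin n → ℝ,
      2 * ((p - pdag) ⬝ᵥ M.mulVec (e (xstar p) - p)) = -∑ i, (p i - pdag i) ^ 2) ∧
    (∀ p : Fin n → ℝ, p ≠ pdag →
      2 * ((p - pdag) ⬝ᵥ M.mulVec (e (xstar p) - p)) < 0) := by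
  have hKW : diagonal k * W = 1 - A := by rw [hA, sub_sub_cancel]
  have hdrift (p : Fin n → ℝ) : e (xstar p) - p = -(A⁻¹ *ᵥ (p - pdag)) := by
    rw [he, hxstar, hKW, one_sub_mulVec_neg_inv_mulVec_sub_sub hAunit, hpdag, hKW,
      sub_sub_cancel_left, neg_mulVec, sub_neg_eq_add]
  have hquad (p : Fin n → ℝ) :
      2 * ((p - pdag) ⬝ᵥ M *ᵥ (e (xstar p) - p)) = -((p - pdag) ⬝ᵥ (p - pdag)) := by
    rw [hdrift, mulVec_neg, dotProduct_neg, mulVec_mulVec, mul_neg,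
      IsSymm.two_mul_dotProduct_mul_mulVec hMsymm hLyap]
  refine ⟨fun p => ?_, fun p hp => ?_⟩
  · rw [hquad]
    simp only [dotProduct, Pi.sub_apply, sq]
  · rw [hquad, neg_lt_zero]
    simpa using dotProduct_star_self_pos_iff.mpr (sub_ne_zero.mpr hp)

/-- Lyapunov computation in the proof of Proposition 3:
with `A = I − KW` invertible, `x*(p) = −A⁻¹p`, `e(x) = KWx − ξ`, `p† = (KW − I)ξ`, and
`M` symmetric satisfying `(A⁻¹)ᵀ M + M A⁻¹ = I`, one has
`2 (p − p†)ᵀ M (e(x*(p)) − p) = −‖p − p†‖²` for every `p`; in particular the Lyapunov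
function `V(p) = (p − p†)ᵀ M (p − p†)` strictly decreases along `ṗ = e(x*(p)) − p`
at every `p ≠ p†`. -/
theorem aggregative_lyapunov_identity
    (n : ℕ) (hn : 1 ≤ n) (W : Matrix (Fin n) (Fin n) ℝ) (hW : ∀ i, W i i = 0)
    (k ξ : Fin n → ℝ)
    (A : Matrix (Fin n) (Fin n) ℝ) (hA : A = 1 - Matrix.diagonal k * W)
    (hAunit : IsUnit A.det)
    (M : Matrix (Fin n) (Fin n) ℝ) (hMsymm : M.IsSymm)
    (hLyap : (A⁻¹)ᵀ * M + M * A⁻¹ = 1)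
    (xstar : (Fin n → ℝ) → (Fin n → ℝ)) (hxstar : ∀ p, xstar p = -(A⁻¹.mulVec p))
    (e : (Fin n → ℝ) → (Fin n → ℝ))
    (he : ∀ x, e x = (Matrix.diagonal k * W).mulVec x - ξ)
    (pdag : Fin n → ℝ) (hpdag : pdag = (Matrix.diagonal k * W - 1).mulVec ξ) :
    (∀ p : Fin n → ℝ,
      2 * ((p - pdag) ⬝ᵥ M.mulVec (e (xstar p) - p)) = -∑ i, (p i - pdag i) ^ 2) ∧
    (∀ p : Fin n → ℝ, p ≠ pdag →
      2 * ((p - pdag) ⬝ᵥ M.mulVec (e (xstar p) - p)) < 0) :=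
  aggregative_lyapunov_identity_general n W k ξ A hA hAunit M hMsymm hLyap xstar hxstar e he pdag
    hpdag
end

section
/- Let n ≥ 1, θ, ν ∈ ℝ, δ > 0, and p ∈ ℝⁿ, and let x*(p) ∈ ℝⁿ be given by x*_i(p) = (θ − ν − n p_i + Σ_{j≠i} p_j)/(δ(n+1)). If x : [0, ∞) → ℝⁿ is differentiable and satisfies the best-response dynamics ẋ_i(t) = −x_i(t) + (θ − δ Σ_{j≠i} x_j(t) − ν − p_i)/(2δ) for all t ≥ 0 and all i, then x(t) → x*(p) as t → ∞. -/
/-!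
Writing `e = x - x*`, the equilibrium identity `δ (x*ᵢ + Σⱼ x*ⱼ) = θ - ν - pᵢ` turns the
best-response dynamics into `ėᵢ = -(eᵢ + Σⱼ eⱼ)/2`, independently of `θ, ν, δ, p`. Along it the
Lyapunov function `V = Σᵢ eᵢ²` satisfies `V̇ = -(Σᵢ eᵢ² + (Σᵢ eᵢ)²) ≤ -V`, so Grönwall gives
`V(t) ≤ V(0) e⁻ᵗ → 0`.
-/

open Finset Filter

theorem le_mul_exp_of_hasDerivAt_le_mul {V V' : ℝ → ℝ} {K : ℝ}
    (hV : ∀ t, 0 ≤ t → HasDerivAt V (V' t) t) (hbound : ∀ t, 0 ≤ t → V' t ≤ K * V t)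
    {t : ℝ} (ht : 0 ≤ t) : V t ≤ V 0 * Real.exp (K * t) := by
  have h := le_gronwallBound_of_liminf_deriv_right_le (f' := V') (ε := 0) (b := t)
    (fun s hs => (hV s hs.1).continuousAt.continuousWithinAt)
    (fun s hs _ hr => (hV s hs.1).hasDerivWithinAt.liminf_right_slope_le hr) le_rfl
    (fun s hs => by simpa using hbound s hs.1) t ⟨ht, le_rfl⟩
  rwa [gronwallBound_ε0, sub_zero] at h

theorem tendsto_zero_of_hasDerivAt_le_neg_mul {V V' : ℝ → ℝ} {c : ℝ} (hc : 0 < c)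
    (hV : ∀ t, 0 ≤ t → HasDerivAt V (V' t) t) (hbound : ∀ t, 0 ≤ t → V' t ≤ -c * V t)
    (hV_nonneg : ∀ t, 0 ≤ V t) : Tendsto V atTop (nhds 0) := by
  have hexp : Tendsto (fun t => V 0 * Real.exp (-c * t)) atTop (nhds 0) := by
    simpa using (Real.tendsto_exp_neg_atTop_nhds_zero.comp
      (tendsto_id.const_mul_atTop hc)).const_mul (V 0)
  refine squeeze_zero' (Eventually.of_forall hV_nonneg) ?_ hexp
  filter_upwards [eventually_ge_atTop 0] with t ht
  exact le_mul_exp_of_hasDerivAt_le_mul hV hbound ht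

theorem norm_le_sqrt_sum_sq {ι : Type*} [Fintype ι] (y : ι → ℝ) :
    ‖y‖ ≤ √(∑ i, y i ^ 2) :=
  (pi_norm_le_iff_of_nonneg (Real.sqrt_nonneg _)).mpr fun i =>
    Real.abs_le_sqrt (single_le_sum (fun j _ => sq_nonneg (y j)) (mem_univ i))

theorem tendsto_of_hasDerivAt_eq_neg_half_add_sum {ι : Type*} [Fintype ι]
    {x : ℝ → ι → ℝ} {a : ι → ℝ}
    (hx : ∀ t, 0 ≤ t → HasDerivAt x (fun i => -(x t i - a i + ∑ j, (x t j - a j)) / 2) t) :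
    Tendsto x atTop (nhds a) := by
  have hV : ∀ t, 0 ≤ t → HasDerivAt (fun u => ∑ i, (x u i - a i) ^ 2)
      (-(∑ i, (x t i - a i) ^ 2 + (∑ i, (x t i - a i)) ^ 2)) t := by
    intro t ht
    refine (HasDerivAt.fun_sum fun i _ =>
      ((hasDerivAt_pi.mp (hx t ht) i).sub_const (a i)).pow 2).congr_deriv ?_
    rw [sq (∑ i, (x t i - a i)), sum_mul, ← sum_add_distrib, ← sum_neg_distrib]
    exact sum_congr rfl fun i _ => by ring
  have hV_lim := tendsto_zero_of_hasDerivAt_le_neg_mul one_pos hV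
    (fun t _ => by nlinarith [sq_nonneg (∑ i, (x t i - a i))])
    (fun t => sum_nonneg fun i _ => sq_nonneg _)
  rw [tendsto_iff_norm_sub_tendsto_zero]
  refine squeeze_zero (fun t => norm_nonneg _) (fun t => norm_le_sqrt_sum_sq (x t - a)) ?_
  simpa using hV_lim.sqrt

theorem cournot_equilibrium_add_sum {n : ℕ} {θ ν δ : ℝ} (hδ : δ ≠ 0) {p xstar : Fin n → ℝ}
    (hxstar : ∀ i, xstar i =
      (θ - ν - n * p i + ∑ j ∈ Finset.univ.erase i, p j) / (δ * (n + 1))) (i : Fin n) :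
    δ * (xstar i + ∑ j, xstar j) = θ - ν - p i := by
  have herase : ∀ i, ∑ j ∈ univ.erase i, p j = ∑ j, p j - p i :=
    fun i => sum_erase_eq_sub (mem_univ i)
  have hsum : ∑ j, xstar j = (n * (θ - ν) - ∑ j, p j) / (δ * (n + 1)) := by
    simp only [hxstar, herase, ← sum_div, sum_add_distrib, sum_sub_distrib, sum_const,
      card_univ, Fintype.card_fin, nsmul_eq_mul, ← mul_sum]
    ring
  rw [hsum, hxstar, herase]
  field_simp
  ring

theorem cournot_neg_add_bestResponse_eq {n : ℕ} {θ ν δ : ℝ} (hδ : δ ≠ 0) {p xstar : Fin n → ℝ}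
    (hxstar : ∀ i, xstar i =
      (θ - ν - n * p i + ∑ j ∈ Finset.univ.erase i, p j) / (δ * (n + 1)))
    (y : Fin n → ℝ) (i : Fin n) :
    -y i + (θ - δ * ∑ j ∈ univ.erase i, y j - ν - p i) / (2 * δ) =
      -(y i - xstar i + ∑ j, (y j - xstar j)) / 2 := by
  have hθ : θ = δ * (xstar i + ∑ j, xstar j) + ν + p i := by
    linarith [cournot_equilibrium_add_sum hδ hxstar i]
  rw [sum_erase_eq_sub (mem_univ i), sum_sub_distrib, hθ]
  field_simp
  ring

theorem cournot_best_response_dynamics_converge_general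
    (n : ℕ) (θ ν δ : ℝ) (hδ : 0 < δ) (p : Fin n → ℝ)
    (xstar : Fin n → ℝ)
    (hxstar : ∀ i, xstar i =
      (θ - ν - n * p i + ∑ j ∈ Finset.univ.erase i, p j) / (δ * (n + 1)))
    (x : ℝ → Fin n → ℝ)
    (hode : ∀ t : ℝ, 0 ≤ t → HasDerivAt x
      (fun i => -x t i + (θ - δ * ∑ j ∈ Finset.univ.erase i, x t j - ν - p i) / (2 * δ)) t) :
    Tendsto x atTop (nhds xstar) := by
  refine tendsto_of_hasDerivAt_eq_neg_half_add_sum fun t ht => (hode t ht).congr_deriv ?_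
  funext i
  exact cournot_neg_add_bestResponse_eq hδ.ne' hxstar (x t) i

/-- convergence of best-response dynamics in the Cournot competition:
for any fixed incentive `p`, any solution of the continuous-time best-response dynamics
`ẋᵢ(t) = −xᵢ(t) + (θ − δ Σ_{j≠i} xⱼ(t) − ν − pᵢ)/(2δ)` on `[0, ∞)` converges to the Nash
equilibrium `x*(p)` with `x*ᵢ(p) = (θ − ν − n pᵢ + Σ_{j≠i} pⱼ)/(δ(n+1))`. -/
theorem cournot_best_response_dynamics_converge
    (n : ℕ) (hn : 1 ≤ n) (θ ν δ : ℝ) (hδ : 0 < δ) (p : Fin n → ℝ)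
    (xstar : Fin n → ℝ)
    (hxstar : ∀ i, xstar i =
      (θ - ν - n * p i + ∑ j ∈ Finset.univ.erase i, p j) / (δ * (n + 1)))
    (x : ℝ → Fin n → ℝ)
    (hode : ∀ t : ℝ, 0 ≤ t → HasDerivAt x
      (fun i => -x t i + (θ - δ * ∑ j ∈ Finset.univ.erase i, x t j - ν - p i) / (2 * δ)) t) :
    Tendsto x atTop (nhds xstar) :=
  cournot_best_response_dynamics_converge_general n θ ν δ hδ p xstar hxstar x hode
end
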